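/- Filtration Theorem: let Σ be a set of L≻-formulas closed under subformulas and let J* be a filtration of a Kripke LCR model J through Σ. Then for every formula φ ∈ Σ, every world x of J, and every a ∈ T: v_x(φ) = a if and only if v*_{[x]}(φ) = a. -/
import Mathlib


namespace LCR

/-- Łukasiewicz negation on ℝ. -/
noncomputable def lneg (a : ℝ) : ℝ := 1 - a

/-- Łukasiewicz implication on ℝ. -/
noncomputable def limp (a b : ℝ) : ℝ := min 1 (1 - a + b)

/-- Łukasiewicz strong conjunction ⊙ on ℝ. -/
noncomputable def lodot (a b : ℝ) : ℝ := max 0 (a + b - 1)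

/-- The truth-value set T = {0, 1/(m−1), …, 1}. -/
def Tset (m : ℕ) : Set ℝ := {a | ∃ i : Fin m, a = (i : ℝ) / ((m : ℝ) - 1)}

/-- The k-th truth value k/(m−1). -/
noncomputable def tv (m : ℕ) (k : Fin m) : ℝ := (k : ℝ) / ((m : ℝ) - 1)

/-- Formulas of the language L≻. -/
inductive Formula : Type where
  | var  : ℕ → Formula
  | neg  : Formula → Formula
  | imp  : Formula → Formula → Formula
  | cond : Formula → Formula → Formula
deriving DecidableEq

namespace Formula
/-- φ ∨ ψ := (φ → ψ) → ψ. -/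
def or (φ ψ : Formula) : Formula := .imp (.imp φ ψ) ψ
/-- φ ∧ ψ := ¬(¬φ ∨ ¬ψ). -/
def and (φ ψ : Formula) : Formula := .neg (Formula.or (.neg φ) (.neg ψ))
/-- φ ↔ ψ := (φ → ψ) ∧ (ψ → φ). -/
def iff (φ ψ : Formula) : Formula := Formula.and (.imp φ ψ) (.imp ψ φ)
end Formula

/-- Purely propositional (¬,→)-formulas. -/
inductive PForm : Type where
  | var : ℕ → PForm
  | neg : PForm → PForm
  | imp : PForm → PForm → PForm

/-- Evaluation of a propositional formula under an assignment. -/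
noncomputable def PForm.eval (σ : ℕ → ℝ) : PForm → ℝ
  | .var n => σ n
  | .neg φ => lneg (PForm.eval σ φ)
  | .imp φ ψ => limp (PForm.eval σ φ) (PForm.eval σ ψ)

/-- Tautology of Łukasiewicz m-valued propositional logic. -/
def PForm.Taut (m : ℕ) (φ : PForm) : Prop :=
  ∀ σ : ℕ → ℝ, (∀ n, σ n ∈ Tset m) → PForm.eval σ φ = 1

/-- Substitution of L≻-formulas for the variables of a propositional formula. -/
def PForm.subst (σ : ℕ → Formula) : PForm → Formula
  | .var n => σ n
  | .neg φ => .neg (PForm.subst σ φ)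
  | .imp φ ψ => .imp (PForm.subst σ φ) (PForm.subst σ ψ)

/-- `J` is a family of Rosser–Turquette J-operators: each `J a` is obtained by substitution
into a (¬,→)-definable one-place connective whose value is 1 at inputs equal to `tv m a`
and 0 at all other truth values. -/
def IsJFamily (m : ℕ) (J : Fin m → Formula → Formula) : Prop :=
  ∃ P : Fin m → PForm,
    (∀ a φ, J a φ = PForm.subst (fun _ => φ) (P a)) ∧
    (∀ (a : Fin m) (σ : ℕ → ℝ), (∀ n, σ n ∈ Tset m) →
      PForm.eval σ (P a) = if σ 0 = tv m a then 1 else 0)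

/-- `I` is a family of threshold operators: each `I a` is obtained by substitution into a
(¬,→)-definable one-place connective whose value is 1 at inputs ≥ `tv m a` and 0 otherwise. -/
def IsIFamily (m : ℕ) (I : Fin m → Formula → Formula) : Prop :=
  ∃ P : Fin m → PForm,
    (∀ a φ, I a φ = PForm.subst (fun _ => φ) (P a)) ∧
    (∀ (a : Fin m) (σ : ℕ → ℝ), (∀ n, σ n ∈ Tset m) →
      PForm.eval σ (P a) = if tv m a ≤ σ 0 then 1 else 0)

/-- The index of aᵢ = (m−i)/(m−1) for i = j+1, i.e. m−1−j. -/
def revIdx {m : ℕ} (j : Fin m) : Fin m := ⟨m - 1 - j.1, by have := j.isLt; omega⟩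

/-- Index-level strong conjunction: tv (odotIdx a b) = tv a ⊙ tv b. -/
def odotIdx {m : ℕ} (a b : Fin m) : Fin m :=
  ⟨a.1 + b.1 - (m - 1), by have := a.isLt; have := b.isLt; omega⟩

/-- Nested implication →ⁿᵢ₌₁(φᵢ, ψ) = φₙ → (φₙ₋₁ → (⋯ → (φ₁ → ψ))), with φᵢ = f (i−1). -/
def nestImp : (n : ℕ) → (Fin n → Formula) → Formula → Formula
  | 0, _, ψ => ψ
  | n+1, f, ψ => .imp (f (Fin.last n)) (nestImp n (fun i => f i.castSucc) ψ)

/-- Theorems of the system LCR (relative to the I-operators used in the rules R_a). -/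
inductive Thm (m : ℕ) (I : Fin m → Formula → Formula) : Formula → Prop where
  | taut : ∀ (ψ : PForm) (σ : ℕ → Formula), PForm.Taut m ψ → Thm m I (PForm.subst σ ψ)
  | a1 : ∀ φ ψ θ : Formula,
      Thm m I (.imp (.cond φ (ψ.and θ)) ((Formula.cond φ ψ).and (.cond φ θ)))
  | a2 : ∀ φ ψ θ : Formula,
      Thm m I (.imp ((Formula.cond φ ψ).and (.cond φ θ)) (.cond φ (ψ.and θ)))
  | a3 : ∀ (φ : Formula) (p : ℕ), Thm m I (.cond φ (.imp (.var p) (.var p)))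
  | mp : ∀ φ ψ : Formula, Thm m I (.imp φ ψ) → Thm m I φ → Thm m I ψ
  | rcea : ∀ φ ψ θ : Formula,
      Thm m I (φ.iff ψ) → Thm m I ((Formula.cond φ θ).iff (.cond ψ θ))
  | rcec : ∀ φ ψ θ : Formula,
      Thm m I (φ.iff ψ) → Thm m I ((Formula.cond θ φ).iff (.cond θ ψ))
  | ra : ∀ (a : Fin m) (φ : Formula) (γ : Fin m → Formula) (δ : Formula),
      (∀ b : Fin m,
        Thm m I (nestImp m (fun j => I (odotIdx (revIdx j) b) (γ j)) (I (odotIdx a b) δ))) →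
      Thm m I (nestImp m (fun j => I (revIdx j) (.cond φ (γ j))) (I a (.cond φ δ)))

/-- Γ ⊢_LCR φ : derivability from Γ by theorems of LCR and modus ponens. -/
inductive Deriv (m : ℕ) (I : Fin m → Formula → Formula) (Γ : Set Formula) : Formula → Prop where
  | thm : ∀ φ, Thm m I φ → Deriv m I Γ φ
  | mem : ∀ φ, φ ∈ Γ → Deriv m I Γ φ
  | mp : ∀ φ ψ, Deriv m I Γ (.imp φ ψ) → Deriv m I Γ φ → Deriv m I Γ ψ

/-- A Kripke LCR model over a set of worlds W. -/
structure Model (m : ℕ) (W : Type) : Type where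
  ne : Nonempty W
  R : (Fin m → Set W) → W → W → ℝ
  R_mem : ∀ X x y, R X x y ∈ Tset m
  v : ℕ → W → ℝ
  v_mem : ∀ p x, v p x ∈ Tset m

/-- Valuation of formulas in a Kripke LCR model. -/
noncomputable def Model.val {m : ℕ} {W : Type} (M : Model m W) : Formula → W → ℝ
  | .var p, x => M.v p x
  | .neg φ, x => lneg (M.val φ x)
  | .imp φ ψ, x => limp (M.val φ x) (M.val ψ x)
  | .cond φ ψ, x =>
      sInf (Set.range fun y : W =>
        limp (M.R (fun i => {z : W | M.val φ z = tv m i}) x y) (M.val ψ y))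

/-- Semantic consequence Γ ⊨ φ over all Kripke LCR models. -/
def Entails (m : ℕ) (Γ : Set Formula) (φ : Formula) : Prop :=
  ∀ (W : Type) (M : Model m W) (x : W), (∀ ψ ∈ Γ, M.val ψ x = 1) → M.val φ x = 1

/-- Syntactic consistency. -/
def Consistent (m : ℕ) (I : Fin m → Formula → Formula) (Γ : Set Formula) : Prop :=
  ¬ ∃ φ : Formula, Deriv m I Γ φ ∧ Deriv m I Γ (.neg φ)

/-- Maximal consistency. -/
def MaxConsistent (m : ℕ) (I : Fin m → Formula → Formula) (Γ : Set Formula) : Prop :=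
  Consistent m I Γ ∧ ∀ φ : Formula, Deriv m I Γ φ → φ ∈ Γ


/-- Closure of a set of formulas under subformulas. -/
def SubfClosed (S : Set Formula) : Prop :=
  ∀ φ ψ : Formula,
    (Formula.neg φ ∈ S → φ ∈ S) ∧
    (Formula.imp φ ψ ∈ S → φ ∈ S ∧ ψ ∈ S) ∧
    (Formula.cond φ ψ ∈ S → φ ∈ S ∧ ψ ∈ S)

/-- The equivalence x ≡ y : agreement of values of all formulas of S. -/
def fSetoid (m : ℕ) (W : Type) (M : Model m W) (S : Set Formula) : Setoid W :=
  ⟨fun x y => ∀ φ ∈ S, M.val φ x = M.val φ y,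
   ⟨fun _ _ _ => rfl, fun h φ hφ => (h φ hφ).symm,
    fun h1 h2 φ hφ => (h1 φ hφ).trans (h2 φ hφ)⟩⟩

lemma Tset_subset_Icc (m : ℕ) (hm : 2 ≤ m) : Tset m ⊆ Set.Icc (0:ℝ) 1 := by
  rintro a ⟨i, rfl⟩
  have h2 : (2:ℝ) ≤ (m:ℝ) := by exact_mod_cast hm
  have h0 : (0:ℝ) < (m:ℝ) - 1 := by linarith
  have hi : (i:ℝ) + 1 ≤ (m:ℝ) := by exact_mod_cast i.isLt
  constructor
  · positivity
  · rw [div_le_one h0]; linarith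

lemma Tset_finite (m : ℕ) : (Tset m).Finite := by
  have : Tset m = Set.range (fun i : Fin m => (i : ℝ) / ((m : ℝ) - 1)) := by
    ext a; simp [Tset, Set.range, eq_comm]
  rw [this]; exact Set.finite_range _

lemma limp_mem_Icc {a b : ℝ} (ha : a ∈ Set.Icc (0:ℝ) 1) (hb : b ∈ Set.Icc (0:ℝ) 1) :
    limp a b ∈ Set.Icc (0:ℝ) 1 := by
  obtain ⟨ha0, ha1⟩ := ha; obtain ⟨hb0, hb1⟩ := hb
  unfold limp
  constructor
  · apply le_min <;> linarith
  · exact min_le_left _ _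

lemma limp_antitone {a a' b : ℝ} (h : a ≤ a') : limp a' b ≤ limp a b := by
  unfold limp; exact min_le_min le_rfl (by linarith)

lemma val_mem_Icc {m : ℕ} {W : Type} (hm : 2 ≤ m) (M : Model m W) (φ : Formula) (x : W) :
    M.val φ x ∈ Set.Icc (0:ℝ) 1 := by
  induction φ generalizing x with
  | var p => exact Tset_subset_Icc m hm (M.v_mem p x)
  | neg φ ih =>
    obtain ⟨h0, h1⟩ := ih x
    simp only [Model.val, lneg, Set.mem_Icc]
    constructor <;> linarith
  | imp φ ψ ihφ ihψ =>
    exact limp_mem_Icc (ihφ x) (ihψ x)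
  | cond φ ψ ihφ ihψ =>
    obtain ⟨y0⟩ := M.ne
    have hmem : ∀ y : W, limp (M.R (fun i => {z : W | M.val φ z = tv m i}) x y) (M.val ψ y)
        ∈ Set.Icc (0:ℝ) 1 := fun y =>
      limp_mem_Icc (Tset_subset_Icc m hm (M.R_mem _ x y)) (ihψ y)
    have hbdd : BddBelow (Set.range fun y : W =>
        limp (M.R (fun i => {z : W | M.val φ z = tv m i}) x y) (M.val ψ y)) := by
      refine ⟨0, ?_⟩; rintro r ⟨y, rfl⟩; exact (hmem y).1
    simp only [Model.val]
    constructor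
    · exact le_csInf ⟨_, ⟨y0, rfl⟩⟩ (by rintro r ⟨y, rfl⟩; exact (hmem y).1)
    · exact csInf_le_of_le hbdd ⟨y0, rfl⟩ (hmem y0).2

/-- Filtration Theorem: for every φ ∈ Σ, world x and a ∈ T,
v_x(φ) = a iff v*_{[x]}(φ) = a. -/
theorem filtration_theorem (m : ℕ) (hm : 2 ≤ m)
    (W : Type) (M : Model m W) (S : Set Formula) (hS : SubfClosed S)
    (M' : Model m (Quotient (fSetoid m W M S)))
    (hv : ∀ p : ℕ, Formula.var p ∈ S →
      ∀ y : W, M'.v p (Quotient.mk (fSetoid m W M S) y) = M.v p y)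
    (hR : ∀ (X : Fin m → Set W) (x y : W),
      M'.R (fun i => Quotient.mk (fSetoid m W M S) '' X i)
          (Quotient.mk (fSetoid m W M S) x) (Quotient.mk (fSetoid m W M S) y)
        = sSup {r : ℝ | ∃ x' y' : W,
            (fSetoid m W M S).r x' x ∧ (fSetoid m W M S).r y' y ∧ r = M.R X x' y'}) :
    ∀ φ ∈ S, ∀ (x : W) (a : ℝ), a ∈ Tset m →
      (M.val φ x = a ↔ M'.val φ (Quotient.mk (fSetoid m W M S) x) = a) := by
  suffices h : ∀ φ ∈ S, ∀ x : W, M'.val φ (Quotient.mk (fSetoid m W M S) x) = M.val φ x by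
    intro φ hφ x a _
    rw [h φ hφ x]
  intro φ
  induction φ with
  | var p =>
    intro hp x
    simpa only [Model.val] using hv p hp x
  | neg φ ih =>
    intro h x
    have hφ := (hS φ φ).1 h
    simp only [Model.val, ih hφ x]
  | imp φ ψ ihφ ihψ =>
    intro h x
    obtain ⟨hφ, hψ⟩ := (hS φ ψ).2.1 h
    simp only [Model.val, ihφ hφ x, ihψ hψ x]
  | cond φ ψ ihφ ihψ =>
    intro h x
    obtain ⟨hφ, hψ⟩ := (hS φ ψ).2.2 h
    set mk := Quotient.mk (fSetoid m W M S) with hmk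
    set X : Fin m → Set W := fun i => {z : W | M.val φ z = tv m i} with hX
    -- Step A : the components of |φ| in the filtrated model are images of those in M
    have hA : (fun i => {q : Quotient (fSetoid m W M S) | M'.val φ q = tv m i})
        = fun i => mk '' X i := by
      funext i
      ext q
      obtain ⟨z, rfl⟩ := Quotient.exists_rep q
      constructor
      · intro hq
        refine ⟨z, ?_, rfl⟩
        show M.val φ z = tv m i
        rw [← ihφ hφ z]; exact hq
      · rintro ⟨z', hz', hq⟩
        have hzz : (fSetoid m W M S).r z' z := Quotient.exact hq
        have : M.val φ z = tv m i := by rw [← hzz φ hφ]; exact hz'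
        show M'.val φ (mk z) = tv m i
        rw [ihφ hφ z]; exact this
    -- the sets appearing in hR
    set G : W → W → Set ℝ := fun x y => {r : ℝ | ∃ x' y' : W,
        (fSetoid m W M S).r x' x ∧ (fSetoid m W M S).r y' y ∧ r = M.R X x' y'} with hG
    have hGsub : ∀ x y, G x y ⊆ Tset m := by
      rintro x y r ⟨x', y', _, _, rfl⟩; exact M.R_mem X x' y'
    have hGfin : ∀ x y, (G x y).Finite := fun x y =>
      (Tset_finite m).subset (hGsub x y)
    have hGne : ∀ x y, (G x y).Nonempty := fun x y =>
      ⟨M.R X x y, x, y, (fSetoid m W M S).refl x, (fSetoid m W M S).refl y, rfl⟩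
    -- bounds
    have hF'mem : ∀ q, limp (M'.R (fun i => mk '' X i) (mk x) q) (M'.val ψ q)
        ∈ Set.Icc (0:ℝ) 1 := fun q =>
      limp_mem_Icc (Tset_subset_Icc m hm (M'.R_mem _ _ q)) (val_mem_Icc hm M' ψ q)
    have hFmem : ∀ x' y, limp (M.R X x' y) (M.val ψ y) ∈ Set.Icc (0:ℝ) 1 := fun x' y =>
      limp_mem_Icc (Tset_subset_Icc m hm (M.R_mem X x' y)) (val_mem_Icc hm M ψ y)
    -- rewrite M'.R at quotient pairs
    have hR' : ∀ y : W, M'.R (fun i => mk '' X i) (mk x) (mk y) = sSup (G x y) := fun y =>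
      hR X x y
    -- unfold both sides
    show sInf (Set.range fun q => limp
        (M'.R (fun i => {z | M'.val φ z = tv m i}) (mk x) q) (M'.val ψ q))
      = sInf (Set.range fun y : W => limp (M.R X x y) (M.val ψ y))
    rw [hA]
    apply le_antisymm
    · -- ≤ : for each y, the filtrated term at ⟦y⟧ is below the term at y
      refine le_csInf ⟨_, ⟨Classical.choice M.ne, rfl⟩⟩ ?_
      rintro r ⟨y, rfl⟩
      refine csInf_le_of_le ⟨0, by rintro r ⟨q, rfl⟩; exact (hF'mem q).1⟩ ⟨mk y, rfl⟩ ?_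
      show limp (M'.R (fun i => mk '' X i) (mk x) (mk y)) (M'.val ψ (mk y))
        ≤ limp (M.R X x y) (M.val ψ y)
      rw [hR' y, ihψ hψ y]
      exact limp_antitone (le_csSup ((hGfin x y).bddAbove)
        ⟨x, y, (fSetoid m W M S).refl x, (fSetoid m W M S).refl y, rfl⟩)
    · -- ≥ : the value c is a lower bound of the filtrated terms
      refine le_csInf ⟨_, ⟨mk x, rfl⟩⟩ ?_
      rintro r ⟨q, rfl⟩
      obtain ⟨y, rfl⟩ := Quotient.exists_rep q
      show sInf (Set.range fun y : W => limp (M.R X x y) (M.val ψ y))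
        ≤ limp (M'.R (fun i => mk '' X i) (mk x) (mk y)) (M'.val ψ (mk y))
      rw [hR' y, ihψ hψ y]
      obtain ⟨x', y', hx', hy', hsup⟩ := (hGne x y).csSup_mem (hGfin x y)
      rw [hsup, ← hy' ψ hψ]
      have hcx : M.val (Formula.cond φ ψ) x = M.val (Formula.cond φ ψ) x' :=
        (hx' (Formula.cond φ ψ) h).symm
      calc M.val (Formula.cond φ ψ) x
          = sInf (Set.range fun z : W => limp (M.R X x' z) (M.val ψ z)) := hcx
        _ ≤ limp (M.R X x' y') (M.val ψ y') :=
          csInf_le ⟨0, by rintro r ⟨z, rfl⟩; exact (hFmem x' z).1⟩ ⟨y', rfl⟩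

end LCR
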